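/- arXiv:2605.06640 — 7 statements merged into one kernel-verified Lean document; each statement's English description precedes it below -/
import Mathlib

section
/- Let g : (Fin n → Bool) → K be single-flip monotone for k. Then for every set X ⊆ Fin n, X is an original weak abductive explanation (i.e., g b = k for every assignment b with b j = true for all j ∈ X) if and only if g bX = k, where bX is the canonical abductive assignment of X (bX j = true iff j ∈ X). -/
open scoped Classical

/-!
Single-flip monotonicity makes `{b | g b = k}` an up-set: any `b ≥ bX` is obtained from `bX` by
switching its remaining `true` coordinates on one at a time. Every `b` that is `true` on `X`
dominates `bX`, so checking `bX` suffices.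
-/

theorem Finset.piecewise_induction {ι α : Type*} [DecidableEq ι] {P : (ι → α) → Prop}
    (f : ι → α) (hupdate : ∀ b j, P b → P (Function.update b j (f j)))
    (s : Finset ι) {b : ι → α} (hb : P b) : P (s.piecewise f b) := by
  induction s using Finset.induction_on with
  | empty => simpa using hb
  | insert j s _ ih => simpa only [Finset.piecewise_insert] using hupdate _ j ih

theorem monotone_of_update_true {ι : Type*} [Fintype ι] [DecidableEq ι]
    {P : (ι → Bool) → Prop} (hupdate : ∀ b j, P b → P (Function.update b j true)) :
    Monotone P := by
  intro b b' hle hb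
  have hb' : b' = (Finset.univ.filter (b' · = true)).piecewise (fun _ => true) b := by
    funext j
    cases hj : b' j
    · simp [hj, Bool.eq_false_of_le_false (hj ▸ hle j)]
    · simp [hj]
  rw [hb']
  exact Finset.piecewise_induction _ hupdate _ hb

/-- If `g` is single-flip monotone for `k`, then a set `X ⊆ Fin n`
is an original weak abductive explanation iff the simplified check on the canonical
abductive assignment `bX` (true exactly on `X`) succeeds. -/
theorem weakConAXp_iff_canonical {n : ℕ} {K : Type*} (k : K)
    (g : (Fin n → Bool) → K)
    (hmono : ∀ (b : Fin n → Bool) (j : Fin n),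
      g b = k → g (Function.update b j true) = k)
    (X : Set (Fin n)) :
    (∀ b : Fin n → Bool, (∀ j ∈ X, b j = true) → g b = k) ↔
      g (fun j => decide (j ∈ X)) = k := by
  refine ⟨fun h => h _ fun j hj => decide_eq_true hj, fun hX b hb => ?_⟩
  have hle : (fun j => decide (j ∈ X)) ≤ b := fun j => by
    by_cases hj : j ∈ X <;> simp [hj, hb]
  exact monotone_of_update_true (P := (g · = k)) hmono hle hX
end

section
/- Let g : (Fin n → Bool) → K be single-flip monotone for k. Then for every set X ⊆ Fin n, X is an original weak contrastive explanation (i.e., there exists an assignment b with b j = true for all j ∉ X and g b ≠ k) if and only if g cX ≠ k, where cX is the canonical contrastive assignment of X (cX j = true iff j ∉ X). -/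
open scoped Classical

private lemma flip_set {n : ℕ} {K : Type*} (k : K)
    (g : (Fin n → Bool) → K)
    (hmono : ∀ (b : Fin n → Bool) (j : Fin n),
      g b = k → g (Function.update b j true) = k)
    (s : Finset (Fin n)) (b : Fin n → Bool) (hb : g b = k) :
    g (fun j => if j ∈ s then true else b j) = k := by
  induction s using Finset.induction_on with
  | empty => simpa using hb
  | @insert a s ha ih =>
    have := hmono _ a ih
    convert this using 2
    funext j
    by_cases hj : j = a <;> simp [hj, Function.update, ha]

/-- If `g` is single-flip monotone for `k`, then a set `X ⊆ Fin n`
is an original weak contrastive explanation iff the simplified check on the canonical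
contrastive assignment `cX` (true exactly off `X`) succeeds. -/
theorem weakConCXp_iff_canonical {n : ℕ} {K : Type*} (k : K)
    (g : (Fin n → Bool) → K)
    (hmono : ∀ (b : Fin n → Bool) (j : Fin n),
      g b = k → g (Function.update b j true) = k)
    (X : Set (Fin n)) :
    (∃ b : Fin n → Bool, (∀ j ∉ X, b j = true) ∧ g b ≠ k) ↔
      g (fun j => decide (j ∉ X)) ≠ k := by
  constructor
  · rintro ⟨b, hbX, hbk⟩ hck
    apply hbk
    have := flip_set k g hmono (Finset.univ.filter (fun j => b j = true))
      (fun j => decide (j ∉ X)) hck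
    convert this using 2
    funext j
    by_cases hj : b j = true
    · simp [hj]
    · have hjX : j ∈ X := by
        by_contra h; exact hj (hbX j h)
      simp [hj, hjX]
  · intro h
    exact ⟨fun j => decide (j ∉ X), fun j hj => by simp [hj], h⟩
end

section
/- Without any monotonicity assumption on g : (Fin n → Bool) → K, a set X ⊆ Fin n is a subset-minimal original weak contrastive explanation (i.e., X is an original WeakCXp and no proper subset of X is an original WeakCXp) if and only if X satisfies the simplified contrastive check (g cX ≠ k, where cX j = true iff j ∉ X) and no proper subset X' ⊊ X satisfies the simplified contrastive check (g cX' ≠ k). -/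
open scoped Classical

/-- Without any monotonicity assumption, `X` is a subset-minimal
original weak contrastive explanation iff `X` passes the simplified contrastive
check and no proper subset of `X` passes the simplified contrastive check. -/
theorem minimal_weakConCXp_iff_simplified {n : ℕ} {K : Type*} (k : K)
    (g : (Fin n → Bool) → K) (X : Set (Fin n)) :
    ((∃ b : Fin n → Bool, (∀ j ∉ X, b j = true) ∧ g b ≠ k) ∧
      ∀ X' : Set (Fin n), X' ⊂ X →
        ¬ ∃ b : Fin n → Bool, (∀ j ∉ X', b j = true) ∧ g b ≠ k) ↔
    (g (fun j => decide (j ∉ X)) ≠ k ∧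
      ∀ X' : Set (Fin n), X' ⊂ X → ¬ g (fun j => decide (j ∉ X')) ≠ k) := by
  constructor
  · rintro ⟨⟨b, hb, hgb⟩, hmin⟩
    set Y : Set (Fin n) := {j | b j = false} with hY
    have hbY : b = fun j => decide (j ∉ Y) := by
      funext j
      by_cases h : b j = false
      · simp [hY, h]
      · simp only [Bool.not_eq_false] at h
        simp [hY, h]
    have hYX : Y ⊆ X := by
      intro j hj
      by_contra hjx
      have := hb j hjx
      simp [hY, Set.mem_setOf_eq, this] at hj
    have hYeq : Y = X := by
      by_contra hne
      exact hmin Y ⟨hYX, fun hXY => hne (le_antisymm hYX hXY)⟩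
        ⟨b, fun j hj => by
          by_contra h
          simp only [Bool.not_eq_true] at h
          exact hj h, hgb⟩
    constructor
    · rw [← hYeq]
      intro h
      exact hgb (by rw [hbY]; convert h using 3; exact decide_eq_decide.mpr Iff.rfl)
    · intro X' hX' hgX'
      exact hmin X' hX' ⟨fun j => decide (j ∉ X'), fun j hj => by simp [hj], hgX'⟩
  · rintro ⟨hg, hmin⟩
    refine ⟨⟨fun j => decide (j ∉ X), fun j hj => by simp [hj], hg⟩, ?_⟩
    rintro X' hX' ⟨b, hb, hgb⟩
    set Y : Set (Fin n) := {j | b j = false} with hY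
    have hbY : b = fun j => decide (j ∉ Y) := by
      funext j
      by_cases h : b j = false
      · simp [hY, h]
      · simp only [Bool.not_eq_false] at h
        simp [hY, h]
    have hYX' : Y ⊆ X' := by
      intro j hj
      by_contra hjx
      have := hb j hjx
      simp [hY, Set.mem_setOf_eq, this] at hj
    refine hmin Y (lt_of_le_of_lt hYX' hX') fun h => hgb ?_
    rw [hbY]
    convert h using 3
    exact decide_eq_decide.mpr Iff.rfl
end

section
/- Without any monotonicity assumption on g : (Fin n → Bool) → K, every subset-minimal original weak contrastive explanation X ⊆ Fin n has its canonical contrastive assignment as a witness: if X is an original WeakCXp and no proper subset of X is an original WeakCXp, then g cX ≠ k, where cX j = true iff j ∉ X. -/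
open scoped Classical

/-- Without any monotonicity assumption, every subset-minimal
original weak contrastive explanation has its canonical contrastive assignment
as a witness: `g cX ≠ k` where `cX j = true` iff `j ∉ X`. -/
theorem minimal_weakConCXp_canonical_witness {n : ℕ} {K : Type*} (k : K)
    (g : (Fin n → Bool) → K) (X : Set (Fin n))
    (hX : ∃ b : Fin n → Bool, (∀ j ∉ X, b j = true) ∧ g b ≠ k)
    (hmin : ∀ X' : Set (Fin n), X' ⊂ X →
      ¬ ∃ b : Fin n → Bool, (∀ j ∉ X', b j = true) ∧ g b ≠ k) :
    g (fun j => decide (j ∉ X)) ≠ k := by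
  obtain ⟨b, hb, hgb⟩ := hX
  set X' : Set (Fin n) := {j | j ∈ X ∧ b j = false} with hX'def
  have hsub : X' ⊆ X := fun j hj => hj.1
  have hwit : ∀ j ∉ X', b j = true := by
    intro j hj
    by_cases hjX : j ∈ X
    · cases hbj : b j
      · exact absurd ⟨hjX, hbj⟩ hj
      · rfl
    · exact hb j hjX
  have heq : X' = X := by
    by_contra hne
    exact hmin X' ⟨hsub, fun h => hne (le_antisymm hsub h)⟩ ⟨b, hwit, hgb⟩
  have hbeq : b = fun j => decide (j ∉ X) := by
    funext j
    by_cases hjX : j ∈ X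
    · have : j ∈ X' := heq ▸ hjX
      simp [this.2, hjX]
    · simp [hb j hjX, hjX]
  rwa [hbeq] at hgb
end

section
/- If the Gram matrix G := Cᵀ * C is invertible, then the vector r := e − C.mulVec (G⁻¹.mulVec (Cᵀ.mulVec e − t)) satisfies Cᵀ.mulVec r = t, and for every r' with Cᵀ.mulVec r' = t one has ‖r − e‖ ≤ ‖r' − e‖, with equality only if r' = r. (Closed-form Ortho erasure in the full-column-rank case.) -/
open Matrix

/-!
The correction `r - e = -C (G⁻¹ (Cᵀ e - t))` lies in the column space of `C`, whereas two
feasible points differ by a vector of `ker Cᵀ`, the orthogonal complement of that column space.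
So for feasible `r'` Pythagoras gives `‖r' - e‖² = ‖r' - r‖² + ‖r - e‖²`.
-/

theorem norm_sub_le_norm_sub_of_real_inner_eq_zero {E : Type*} [NormedAddCommGroup E]
    [InnerProductSpace ℝ E] {e r x : E} (h : inner ℝ (x - r) (r - e) = 0) :
    ‖r - e‖ ≤ ‖x - e‖ ∧ (‖r - e‖ = ‖x - e‖ → x = r) := by
  have hpyth : ‖x - e‖ * ‖x - e‖ = ‖x - r‖ * ‖x - r‖ + ‖r - e‖ * ‖r - e‖ := by
    simpa using norm_add_sq_eq_norm_sq_add_norm_sq_real h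
  refine ⟨?_, fun heq => ?_⟩
  · nlinarith [norm_nonneg (x - r), norm_nonneg (r - e), norm_nonneg (x - e)]
  · rw [← heq] at hpyth
    have hxr : ‖x - r‖ * ‖x - r‖ = 0 := by linarith
    rwa [mul_self_eq_zero, norm_eq_zero, sub_eq_zero] at hxr

theorem Matrix.mulVec_mulVec_nonsing_inv_mul_mulVec {m n α : Type*} [Fintype m] [Fintype n]
    [DecidableEq n] [CommRing α] (A : Matrix n m α) (B : Matrix m n α) (h : IsUnit (A * B))
    (w : n → α) : A *ᵥ (B *ᵥ ((A * B)⁻¹ *ᵥ w)) = w := by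
  rw [mulVec_mulVec, mulVec_mulVec, mul_nonsing_inv _ ((isUnit_iff_isUnit_det _).mp h),
    one_mulVec]

theorem EuclideanSpace.inner_toLp_mulVec {m n : Type*} [Fintype m] [Fintype n]
    (C : Matrix m n ℝ) (v : EuclideanSpace ℝ m) (u : n → ℝ) :
    inner ℝ v (WithLp.toLp 2 (C *ᵥ u)) = Cᵀ *ᵥ v ⬝ᵥ u := by
  rw [inner_eq_star_dotProduct, star_trivial, dotProduct_comm, dotProduct_mulVec,
    mulVec_transpose]

/-- Closed-form Ortho erasure in the full-column-rank case:
if the Gram matrix `G := Cᵀ * C` is invertible, then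
`r := e − C.mulVec (G⁻¹.mulVec (Cᵀ.mulVec e − t))` is feasible and is the unique
minimizer of the Euclidean distance to `e` over the feasible set. -/
theorem ortho_closed_form_full_rank {d n : ℕ}
    (C : Matrix (Fin d) (Fin n) ℝ) (e : EuclideanSpace ℝ (Fin d)) (t : Fin n → ℝ)
    (hG : IsUnit (Cᵀ * C)) :
    Cᵀ.mulVec
        (e - (WithLp.equiv 2 (Fin d → ℝ)).symm
          (C.mulVec ((Cᵀ * C)⁻¹.mulVec (Cᵀ.mulVec e - t)))) = t ∧
    ∀ r' : EuclideanSpace ℝ (Fin d), Cᵀ.mulVec r' = t →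
      ‖(e - (WithLp.equiv 2 (Fin d → ℝ)).symm
          (C.mulVec ((Cᵀ * C)⁻¹.mulVec (Cᵀ.mulVec e - t)))) - e‖ ≤ ‖r' - e‖ ∧
      (‖(e - (WithLp.equiv 2 (Fin d → ℝ)).symm
          (C.mulVec ((Cᵀ * C)⁻¹.mulVec (Cᵀ.mulVec e - t)))) - e‖ = ‖r' - e‖ →
        r' = e - (WithLp.equiv 2 (Fin d → ℝ)).symm
          (C.mulVec ((Cᵀ * C)⁻¹.mulVec (Cᵀ.mulVec e - t)))) := by
  set u := (Cᵀ * C)⁻¹ *ᵥ (Cᵀ *ᵥ e - t)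
  set r := e - (WithLp.equiv 2 (Fin d → ℝ)).symm (C *ᵥ u)
  have hfeas : Cᵀ *ᵥ r = t := by
    change Cᵀ *ᵥ (e.ofLp - C *ᵥ u) = t
    rw [mulVec_sub, mulVec_mulVec_nonsing_inv_mul_mulVec _ _ hG, sub_sub_cancel]
  refine ⟨hfeas, fun r' hr' => norm_sub_le_norm_sub_of_real_inner_eq_zero ?_⟩
  have hcorr : r - e = -WithLp.toLp 2 (C *ᵥ u) := by simp [r]
  rw [hcorr, inner_neg_right, EuclideanSpace.inner_toLp_mulVec, WithLp.ofLp_sub, mulVec_sub,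
    hr', hfeas, sub_self, zero_dotProduct, neg_zero]
end

section
/- Assume G := Cᵀ * C is invertible and fix i : Fin n. Let v := Cᵀ.mulVec e and define t : Fin n → ℝ by t i = 0 and t j = v j for j ≠ i (erase concept i, preserve the others). Then the full-rank closed-form solution e − C.mulVec (G⁻¹.mulVec (Cᵀ.mulVec e − t)) equals r := e − (v i) • C.mulVec (G⁻¹.mulVec (Pi.single i 1)), and r satisfies (Cᵀ.mulVec r) i = 0 and (Cᵀ.mulVec r) j = v j for every j ≠ i. -/
open Matrix

/-- Single-concept erasure: with `G := Cᵀ * C` invertible,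
`v := Cᵀ.mulVec e` and target `t` given by `t i = 0`, `t j = v j` for `j ≠ i`,
the closed-form solution specializes to
`r := e − (v i) • C.mulVec (G⁻¹.mulVec (Pi.single i 1))`, whose concept scores are
`0` at `i` and `v j` at every `j ≠ i`. -/
theorem ortho_single_concept_erasure {d n : ℕ}
    (C : Matrix (Fin d) (Fin n) ℝ) (e : Fin d → ℝ)
    (hG : IsUnit (Cᵀ * C)) (i : Fin n) :
    e - C.mulVec ((Cᵀ * C)⁻¹.mulVec
        (Cᵀ.mulVec e - fun j => if j = i then 0 else Cᵀ.mulVec e j)) =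
      e - (Cᵀ.mulVec e i) • C.mulVec ((Cᵀ * C)⁻¹.mulVec (Pi.single i 1)) ∧
    Cᵀ.mulVec (e - (Cᵀ.mulVec e i) •
        C.mulVec ((Cᵀ * C)⁻¹.mulVec (Pi.single i 1))) i = 0 ∧
    ∀ j : Fin n, j ≠ i →
      Cᵀ.mulVec (e - (Cᵀ.mulVec e i) •
          C.mulVec ((Cᵀ * C)⁻¹.mulVec (Pi.single i 1))) j = Cᵀ.mulVec e j := by
  have hdiff : (Cᵀ.mulVec e - fun j => if j = i then 0 else Cᵀ.mulVec e j)
      = (Cᵀ.mulVec e i) • (Pi.single i 1 : Fin n → ℝ) := by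
    funext j
    by_cases hj : j = i
    · subst hj
      simp [Pi.single_apply]
    · simp [Pi.single_apply, hj]
  have key : ∀ c : ℝ, Cᵀ.mulVec (e - c • C.mulVec ((Cᵀ * C)⁻¹.mulVec (Pi.single i 1)))
      = Cᵀ.mulVec e - c • (Pi.single i 1 : Fin n → ℝ) := by
    intro c
    rw [Matrix.mulVec_sub, Matrix.mulVec_smul, Matrix.mulVec_mulVec,
      Matrix.mulVec_mulVec, Matrix.mul_nonsing_inv _ ((Matrix.isUnit_iff_isUnit_det _).mp hG),
      Matrix.one_mulVec]
  refine ⟨?_, ?_, ?_⟩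
  · rw [hdiff, Matrix.mulVec_smul, Matrix.mulVec_smul]
  · rw [key]
    simp [Pi.single_apply]
  · intro j hj
    rw [key]
    simp [Pi.single_apply, hj]
end

section
/- Assume G := Cᵀ * C is invertible, let S ⊆ Fin n be a set of concept indices to erase, and let P : Matrix (Fin n) (Fin n) ℝ be the diagonal selector matrix with P j j = 1 for j ∈ S and P j j = 0 for j ∉ S (and zero off the diagonal). Then the vector r := e − C.mulVec (G⁻¹.mulVec (P.mulVec (Cᵀ.mulVec e))) satisfies (Cᵀ.mulVec r) j = 0 for every j ∈ S and (Cᵀ.mulVec r) j = (Cᵀ.mulVec e) j for every j ∉ S, and r is the unique minimizer of ‖r' − e‖ among all r' : Fin d → ℝ satisfying these score constraints. (One-shot multi-concept Ortho erasure formula.) -/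
/-!
The correction `v := C G⁻¹ P Cᵀ e` lies in the column space of `C` and satisfies
`Cᵀ v = P Cᵀ e` because `Cᵀ C G⁻¹ = 1`; hence `r := e - v` has scores `(1 - P j j) (Cᵀ e) j`,
which meet the constraints. Any other feasible `r'` has the same scores, so `r' - r` lies in
`ker Cᵀ`, which is orthogonal to the column space of `C` and hence to `r - e = -v`.
Pythagoras then gives `‖r' - e‖² = ‖r' - r‖² + ‖r - e‖²`.
-/

open Matrix

theorem Matrix.IsDiag.mulVec_apply {n α : Type*} [Fintype n] [DecidableEq n]
    [NonUnitalNonAssocSemiring α] {P : Matrix n n α} (hP : P.IsDiag) (x : n → α) (j : n) :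
    (P *ᵥ x) j = P j j * x j := by
  rw [← hP.diagonal_diag, mulVec_diagonal, diagonal_apply_eq, diag_apply]

theorem Matrix.transpose_mulVec_mulVec_gram_inv_mulVec {m n α : Type*} [Fintype m] [Fintype n]
    [DecidableEq n] [CommRing α] {C : Matrix m n α} (hG : IsUnit (Cᵀ * C)) (y : n → α) :
    Cᵀ *ᵥ (C *ᵥ ((Cᵀ * C)⁻¹ *ᵥ y)) = y := by
  rw [mulVec_mulVec, mulVec_mulVec, mul_nonsing_inv _ ((isUnit_iff_isUnit_det _).mp hG),
    one_mulVec]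

theorem EuclideanSpace.inner_toLp_mulVec_eq_zero {m n : Type*} [Fintype m] [Fintype n]
    {C : Matrix m n ℝ} {x : EuclideanSpace ℝ m} (hx : Cᵀ *ᵥ x.ofLp = 0) (w : n → ℝ) :
    inner ℝ x (WithLp.toLp 2 (C *ᵥ w)) = 0 := by
  rw [EuclideanSpace.inner_eq_star_dotProduct, star_trivial, dotProduct_comm, dotProduct_mulVec,
    ← mulVec_transpose, hx, zero_dotProduct]

theorem norm_sub_le_norm_sub_of_inner_eq_zero {E : Type*} [NormedAddCommGroup E]
    [InnerProductSpace ℝ E] {x y e : E} (h : inner ℝ (x - y) (y - e) = 0) :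
    ‖y - e‖ ≤ ‖x - e‖ ∧ (‖y - e‖ = ‖x - e‖ → x = y) := by
  have hpyth : ‖x - e‖ ^ 2 = ‖x - y‖ ^ 2 + ‖y - e‖ ^ 2 := by
    rw [← sub_add_sub_cancel x y e, sq, sq, sq, norm_add_sq_eq_norm_sq_add_norm_sq_real h]
  refine ⟨le_of_sq_le_sq (by nlinarith [sq_nonneg ‖x - y‖]) (norm_nonneg _), fun heq => ?_⟩
  have : ‖x - y‖ ^ 2 = 0 := by rw [heq] at hpyth; linarith
  simpa [sub_eq_zero] using this

/-- One-shot multi-concept Ortho erasure: with `G := Cᵀ * C`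
invertible, `S ⊆ Fin n` a set of concepts to erase, and `P` the diagonal selector
matrix of `S`, the vector `r := e − C.mulVec (G⁻¹.mulVec (P.mulVec (Cᵀ.mulVec e)))`
has concept score `0` on `S`, unchanged scores off `S`, and is the unique minimizer
of the Euclidean distance to `e` among all vectors satisfying these constraints. -/
theorem ortho_multi_concept_erasure {d n : ℕ}
    (C : Matrix (Fin d) (Fin n) ℝ) (e : EuclideanSpace ℝ (Fin d))
    (hG : IsUnit (Cᵀ * C)) (S : Set (Fin n))
    (P : Matrix (Fin n) (Fin n) ℝ)
    (hPin : ∀ j ∈ S, P j j = 1)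
    (hPout : ∀ j ∉ S, P j j = 0)
    (hPoff : ∀ j j' : Fin n, j ≠ j' → P j j' = 0) :
    (∀ j ∈ S,
      Cᵀ.mulVec (e - (WithLp.equiv 2 (Fin d → ℝ)).symm
        (C.mulVec ((Cᵀ * C)⁻¹.mulVec (P.mulVec (Cᵀ.mulVec e))))) j = 0) ∧
    (∀ j ∉ S,
      Cᵀ.mulVec (e - (WithLp.equiv 2 (Fin d → ℝ)).symm
        (C.mulVec ((Cᵀ * C)⁻¹.mulVec (P.mulVec (Cᵀ.mulVec e))))) j
        = Cᵀ.mulVec e j) ∧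
    ∀ r' : EuclideanSpace ℝ (Fin d),
      (∀ j ∈ S, Cᵀ.mulVec r' j = 0) →
      (∀ j ∉ S, Cᵀ.mulVec r' j = Cᵀ.mulVec e j) →
      ‖(e - (WithLp.equiv 2 (Fin d → ℝ)).symm
          (C.mulVec ((Cᵀ * C)⁻¹.mulVec (P.mulVec (Cᵀ.mulVec e))))) - e‖
        ≤ ‖r' - e‖ ∧
      (‖(e - (WithLp.equiv 2 (Fin d → ℝ)).symm
          (C.mulVec ((Cᵀ * C)⁻¹.mulVec (P.mulVec (Cᵀ.mulVec e))))) - e‖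
          = ‖r' - e‖ →
        r' = e - (WithLp.equiv 2 (Fin d → ℝ)).symm
          (C.mulVec ((Cᵀ * C)⁻¹.mulVec (P.mulVec (Cᵀ.mulVec e))))) := by
  set w := (Cᵀ * C)⁻¹ *ᵥ (P *ᵥ (Cᵀ *ᵥ e))
  set r := e - (WithLp.equiv 2 (Fin d → ℝ)).symm (C *ᵥ w)
  have hscore : ∀ j, (Cᵀ *ᵥ r.ofLp) j = (1 - P j j) * (Cᵀ *ᵥ e.ofLp) j := fun j => by
    simp only [r, w, WithLp.ofLp_sub, WithLp.equiv_symm_apply, mulVec_sub,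
      transpose_mulVec_mulVec_gram_inv_mulVec hG, Pi.sub_apply,
      IsDiag.mulVec_apply (P := P) hPoff]
    ring
  refine ⟨fun j hj => (hscore j).trans (by rw [hPin j hj, sub_self, zero_mul]),
    fun j hj => (hscore j).trans (by rw [hPout j hj, sub_zero, one_mul]),
    fun r' hr'in hr'out => ?_⟩
  have hker : Cᵀ *ᵥ (r' - r).ofLp = 0 := by
    ext j
    by_cases hj : j ∈ S
    · simp [mulVec_sub, hscore, hr'in j hj, hPin j hj]
    · simp [mulVec_sub, hscore, hr'out j hj, hPout j hj]
  have horth : inner ℝ (r' - r) (r - e) = 0 := by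
    rw [show r - e = -WithLp.toLp 2 (C *ᵥ w) by simp [r], inner_neg_right,
      EuclideanSpace.inner_toLp_mulVec_eq_zero hker, neg_zero]
  exact norm_sub_le_norm_sub_of_inner_eq_zero horth
end
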